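/- Let X and Y be locally compact, connected Hausdorff spaces, ρ a quasi-integral on C_c(X) whose corresponding topological measure μ = c·μ' is almost simple (μ' simple, c > 0), and η a quasi-integral on C_c(Y) with corresponding compact-finite topological measure ν. The functional η × ρ is a quasi-integral; let ν × μ denote its corresponding topological measure on X × Y. Then for every open A ⊆ X × Y, (ν × μ)(A) = c·ν({y ∈ Y : μ(A_y) = c}), where A_y = {x ∈ X : (x,y) ∈ A}. If ν is finite, the same formula holds for every compact A ⊆ X × Y. -/

import Mathlib

open scoped ENNReal CompactlySupported
open CompactlySupportedContinuousMap

namespace QLF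

variable {X Y : Type*}

/-- Membership in the singly generated subalgebra `B(f)`:
`g ∈ B(f)` iff `g = φ ∘ f` for some continuous `φ` with `φ 0 = 0`. -/
def InB [TopologicalSpace X] (f g : C_c(X, ℝ)) : Prop :=
  ∃ φ : C(ℝ, ℝ), φ 0 = 0 ∧ ∀ x, g x = φ (f x)

/-- A quasi-integral (quasi-linear functional) on `C_c(X)`. -/
structure IsQuasiIntegral [TopologicalSpace X] (ρ : C_c(X, ℝ) → ℝ) : Prop where
  smul : ∀ (a : ℝ) (f : C_c(X, ℝ)), ρ (a • f) = a * ρ f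
  add : ∀ f g h : C_c(X, ℝ), InB f g → InB f h → ρ (g + h) = ρ g + ρ h
  pos : ∀ f : C_c(X, ℝ), (∀ x, 0 ≤ f x) → 0 ≤ ρ f

/-- The value of the topological measure corresponding to `ρ` on an open set. -/
noncomputable def qiOpen [TopologicalSpace X] (ρ : C_c(X, ℝ) → ℝ) (U : Set X) : ℝ≥0∞ :=
  ⨆ (f : C_c(X, ℝ)) (_ : (∀ x, 0 ≤ f x ∧ f x ≤ 1) ∧ tsupport f ⊆ U), ENNReal.ofReal (ρ f)

open Classical in
/-- The topological measure corresponding to a quasi-integral `ρ`: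
on open sets given by `qiOpen`, on other (closed) sets by outer regularity. -/
noncomputable def qiMeas [TopologicalSpace X] (ρ : C_c(X, ℝ) → ℝ) (A : Set X) : ℝ≥0∞ :=
  if IsOpen A then qiOpen ρ A
  else ⨅ (U : Set X) (_ : IsOpen U ∧ A ⊆ U), qiOpen ρ U

/-- A topological measure on `X` (as a set function on all sets; only its values on
open and closed sets are constrained/meaningful). -/
def IsTopMeasure [TopologicalSpace X] (μ : Set X → ℝ≥0∞) : Prop :=
  (∀ A B : Set X, Disjoint A B → (IsCompact A ∨ IsOpen A) → (IsCompact B ∨ IsOpen B) →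
      (IsCompact (A ∪ B) ∨ IsOpen (A ∪ B)) → μ (A ∪ B) = μ A + μ B) ∧
  (∀ U : Set X, IsOpen U → μ U = ⨆ (K : Set X) (_ : IsCompact K ∧ K ⊆ U), μ K) ∧
  (∀ F : Set X, IsClosed F → μ F = ⨅ (U : Set X) (_ : IsOpen U ∧ F ⊆ U), μ U)

/-- A simple topological measure: assumes only the values 0 and 1 on open and closed sets. -/
def IsSimpleTM [TopologicalSpace X] (μ : Set X → ℝ≥0∞) : Prop :=
  IsTopMeasure μ ∧ ∀ A : Set X, IsOpen A ∨ IsClosed A → μ A = 0 ∨ μ A = 1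

/-- A simple quasi-integral: its corresponding topological measure assumes only 0 and 1. -/
def IsSimpleQI [TopologicalSpace X] (ρ : C_c(X, ℝ) → ℝ) : Prop :=
  ∀ A : Set X, IsOpen A ∨ IsClosed A → qiMeas ρ A = 0 ∨ qiMeas ρ A = 1

/-- An almost simple quasi-integral: its corresponding topological measure is a positive
scalar multiple of a simple topological measure. -/
def IsAlmostSimpleQI [TopologicalSpace X] (ρ : C_c(X, ℝ) → ℝ) : Prop :=
  ∃ (c : ℝ≥0∞) (μ' : Set X → ℝ≥0∞), 0 < c ∧ c ≠ ∞ ∧ IsSimpleTM μ' ∧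
    ∀ A : Set X, IsOpen A ∨ IsClosed A → qiMeas ρ A = c * μ' A

/-- The composition `φ ∘ f` as an element of `C_c(X, ℝ)`, for continuous `φ` with `φ 0 = 0`. -/
noncomputable def compCc [TopologicalSpace X] (φ : C(ℝ, ℝ)) (hφ : φ 0 = 0)
    (f : C_c(X, ℝ)) : C_c(X, ℝ) :=
  ⟨⟨fun x => φ (f x), φ.continuous.comp f.continuous⟩, f.hasCompactSupport'.comp_left hφ⟩

section Products

variable [TopologicalSpace X] [TopologicalSpace Y]

/-- The section `f_y ∈ C_c(X)` of `f ∈ C_c(X × Y)`, `f_y (x) = f (x, y)`. -/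
noncomputable def fiberY [T2Space X] (f : C_c(X × Y, ℝ)) (y : Y) : C_c(X, ℝ) :=
  ⟨⟨fun x => f (x, y), f.continuous.comp (continuous_id.prodMk continuous_const)⟩,
    HasCompactSupport.intro (f.hasCompactSupport'.image continuous_fst)
      (fun x hx => by
        by_contra h
        exact hx ⟨(x, y), subset_tsupport _ h, rfl⟩)⟩

/-- The section `f_x ∈ C_c(Y)` of `f ∈ C_c(X × Y)`, `f_x (y) = f (x, y)`. -/
noncomputable def fiberX [T2Space Y] (f : C_c(X × Y, ℝ)) (x : X) : C_c(Y, ℝ) :=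
  ⟨⟨fun y => f (x, y), f.continuous.comp (continuous_const.prodMk continuous_id)⟩,
    HasCompactSupport.intro (f.hasCompactSupport'.image continuous_snd)
      (fun y hy => by
        by_contra h
        exact hy ⟨(x, y), subset_tsupport _ h, rfl⟩)⟩

/-- `T_ρ(f) (y) = ρ (f_y)` as a bare function on `Y`. -/
noncomputable def Tmap [T2Space X] (ρ : C_c(X, ℝ) → ℝ) (f : C_c(X × Y, ℝ)) : Y → ℝ :=
  fun y => ρ (fiberY f y)

/-- `S_η(f) (x) = η (f_x)` as a bare function on `X`. -/
noncomputable def Smap [T2Space Y] (η : C_c(Y, ℝ) → ℝ) (f : C_c(X × Y, ℝ)) : X → ℝ :=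
  fun x => η (fiberX f x)

open Classical in
/-- `T_ρ(f)` as an element of `C_c(Y, ℝ)` (when `ρ` is a quasi-integral, `T_ρ(f)` is indeed
continuous with compact support, and this definition takes the first branch). -/
noncomputable def TCc [T2Space X] (ρ : C_c(X, ℝ) → ℝ) (f : C_c(X × Y, ℝ)) : C_c(Y, ℝ) :=
  if h : Continuous (Tmap ρ f) ∧ HasCompactSupport (Tmap ρ f)
  then ⟨⟨Tmap ρ f, h.1⟩, h.2⟩ else 0

open Classical in
/-- `S_η(f)` as an element of `C_c(X, ℝ)`. -/
noncomputable def SCc [T2Space Y] (η : C_c(Y, ℝ) → ℝ) (f : C_c(X × Y, ℝ)) : C_c(X, ℝ) :=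
  if h : Continuous (Smap η f) ∧ HasCompactSupport (Smap η f)
  then ⟨⟨Smap η f, h.1⟩, h.2⟩ else 0

/-- The repeated quasi-integral `(η × ρ) (f) = η (T_ρ (f))`. -/
noncomputable def prodQI [T2Space X] (η : C_c(Y, ℝ) → ℝ) (ρ : C_c(X, ℝ) → ℝ) :
    C_c(X × Y, ℝ) → ℝ := fun f => η (TCc ρ f)

/-- The repeated quasi-integral `(ρ × η) (f) = ρ (S_η (f))`. -/
noncomputable def prodQI' [T2Space Y] (ρ : C_c(X, ℝ) → ℝ) (η : C_c(Y, ℝ) → ℝ) :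
    C_c(X × Y, ℝ) → ℝ := fun f => ρ (SCc η f)

/-- The tensor product `(g ⊗ h) (x, y) = g (x) * h (y)` as an element of `C_c(X × Y, ℝ)`. -/
noncomputable def tensor (g : C_c(X, ℝ)) (h : C_c(Y, ℝ)) : C_c(X × Y, ℝ) :=
  ⟨⟨fun p => g p.1 * h p.2,
      (g.continuous.comp continuous_fst).mul (h.continuous.comp continuous_snd)⟩,
    HasCompactSupport.intro' (g.hasCompactSupport'.prod h.hasCompactSupport')
      ((isClosed_tsupport _).prod (isClosed_tsupport _))
      (fun p hp => by
        rcases not_and_or.mp (by simpa [Set.mem_prod] using hp) with h1 | h1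
        · simp [image_eq_zero_of_notMem_tsupport h1]
        · simp [image_eq_zero_of_notMem_tsupport h1])⟩

end Products

/-- A topological measure is subadditive (equivalently, extends to a Borel measure). -/
def IsSubadditiveOnOpens [TopologicalSpace X] (μ : Set X → ℝ≥0∞) : Prop :=
  ∀ U V : Set X, IsOpen U → IsOpen V → μ (U ∪ V) ≤ μ U + μ V

/-- `μ` is a positive scalar multiple of a point mass `δ_{x₀}` (on open and closed sets). -/
def IsPointMassMultiple [TopologicalSpace X] (μ : Set X → ℝ≥0∞) : Prop :=
  ∃ (c : ℝ≥0∞) (x₀ : X), 0 < c ∧ c ≠ ∞ ∧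
    ∀ A : Set X, IsOpen A ∨ IsClosed A →
      μ A = c * A.indicator (fun _ => (1 : ℝ≥0∞)) x₀

end QLF

/-!
For a simple topological measure `μ` with `μ X = 1`, every `k ∈ C_c(X)` is `μ`-concentrated
near a single number `value μ k`, read off from the superlevel sets `{t < k}` of its positive and
negative parts. An almost simple quasi-integral `ρ = c μ` is therefore a scaled "evaluation":
`ρ (φ ∘ k) = c φ (value μ k)` for every continuous `φ` with `φ 0 = 0`.

Applied fibrewise, `T_ρ f (y) = c · value μ (f_y)`; this is continuous in `y` (the value is
Lipschitz for the sup norm) and `T_ρ` maps `B(f)` additively into `B(T_ρ f)`, so `η × ρ` is a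
quasi-integral. For open `A`, a test function `f` on `A` has `value μ (f_y) ∈ [0, 1]`, positive
only where `μ (A_y) = 1`; with compact-finiteness of `ν` this bounds `(ν × μ)(A)` by
`c ν {y | μ(A_y) = c}`. Conversely every test function `g` on that set equals `c⁻¹ T_ρ F` for a
test function `F` on `A` glued from Urysohn bumps. Compact sets follow by outer regularity, using
open neighbourhoods of `A` whose fibres over `y ∉ V` lie in `μ`-null open sets.
-/

namespace QLF

section QuasiIntegral

variable {X : Type*} [TopologicalSpace X] {ρ : C_c(X, ℝ) → ℝ}

@[simp]
theorem compCc_apply (φ : C(ℝ, ℝ)) (hφ : φ 0 = 0) (f : C_c(X, ℝ)) (x : X) :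
    compCc φ hφ f x = φ (f x) := rfl

@[simp]
theorem compCc_id (f : C_c(X, ℝ)) : compCc (ContinuousMap.id ℝ) rfl f = f := rfl

theorem exists_pos_upper_bound (f : C_c(X, ℝ)) : ∃ M, 0 < M ∧ ∀ x, f x ≤ M := by
  obtain ⟨C, hC⟩ := f.hasCompactSupport.exists_bound_of_continuous f.continuous
  exact ⟨max C 1, by positivity, fun x => (le_abs_self _).trans ((hC x).trans (le_max_left _ _))⟩

noncomputable def posPartCc (k : C_c(X, ℝ)) : C_c(X, ℝ) :=
  compCc ⟨fun s => max s 0, by fun_prop⟩ (by simp) k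

noncomputable def negPartCc (k : C_c(X, ℝ)) : C_c(X, ℝ) :=
  compCc ⟨fun s => max (-s) 0, by fun_prop⟩ (by simp) k

@[simp]
theorem posPartCc_apply (k : C_c(X, ℝ)) (x : X) : posPartCc k x = max (k x) 0 := rfl

@[simp]
theorem negPartCc_apply (k : C_c(X, ℝ)) (x : X) : negPartCc k x = max (-k x) 0 := rfl

namespace IsQuasiIntegral

theorem map_zero (hρ : IsQuasiIntegral ρ) : ρ 0 = 0 := by
  simpa using hρ.smul 0 0

theorem map_comp_add (hρ : IsQuasiIntegral ρ) (f : C_c(X, ℝ)) {φ ψ : C(ℝ, ℝ)}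
    (hφ : φ 0 = 0) (hψ : ψ 0 = 0) :
    ρ (compCc φ hφ f + compCc ψ hψ f) = ρ (compCc φ hφ f) + ρ (compCc ψ hψ f) :=
  hρ.add f _ _ ⟨φ, hφ, fun _ => rfl⟩ ⟨ψ, hψ, fun _ => rfl⟩

theorem eq_add_of_comp (hρ : IsQuasiIntegral ρ) (f : C_c(X, ℝ)) {φ ψ : C(ℝ, ℝ)}
    (hφ : φ 0 = 0) (hψ : ψ 0 = 0) (h : ∀ s, φ s + ψ s = s) :
    ρ f = ρ (compCc φ hφ f) + ρ (compCc ψ hψ f) := by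
  rw [← hρ.map_comp_add f hφ hψ]
  congr 1
  ext x
  simp [h]

theorem comp_mono (hρ : IsQuasiIntegral ρ) (f : C_c(X, ℝ)) {φ ψ : C(ℝ, ℝ)}
    (hφ : φ 0 = 0) (hψ : ψ 0 = 0) (h : ∀ x, φ (f x) ≤ ψ (f x)) :
    ρ (compCc φ hφ f) ≤ ρ (compCc ψ hψ f) := by
  have hψφ : (ψ - φ) 0 = 0 := by simp [hφ, hψ]
  have hsplit : compCc ψ hψ f = compCc φ hφ f + compCc (ψ - φ) hψφ f := by ext x; simp
  rw [hsplit, hρ.map_comp_add f hφ hψφ, le_add_iff_nonneg_right]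
  exact hρ.pos _ fun x => by simpa using h x

/-- `g = (g + h - 1)⁺` and `h = min (g + h) 1` both lie in `B(g + h)`, where they are ordered. -/
theorem le_of_eq_one_on_tsupport (hρ : IsQuasiIntegral ρ) {g h : C_c(X, ℝ)}
    (hg : ∀ x, 0 ≤ g x ∧ g x ≤ 1) (hh : ∀ x, 0 ≤ h x ∧ h x ≤ 1)
    (hone : ∀ x ∈ tsupport g, h x = 1) : ρ g ≤ ρ h := by
  let φ : C(ℝ, ℝ) := ⟨fun s => max (s - 1) 0, by fun_prop⟩
  let ψ : C(ℝ, ℝ) := ⟨fun s => min s 1, by fun_prop⟩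
  have hcases : ∀ x, g x = 0 ∨ h x = 1 := fun x =>
    (em (g x = 0)).imp_right fun hx => hone x (subset_tsupport _ hx)
  have hφg : compCc φ (by simp [φ]) (g + h) = g := by
    ext x
    rcases hcases x with hx | hx <;> simp [φ, hx, (hg x).1, (hh x).2]
  have hψh : compCc ψ (by simp [ψ]) (g + h) = h := by
    ext x
    rcases hcases x with hx | hx <;> simp [ψ, hx, (hg x).1, (hh x).2]
  have key := hρ.comp_mono (g + h) (φ := φ) (ψ := ψ) (by simp [φ]) (by simp [ψ]) fun x => by
    rcases hcases x with hx | hx <;> simp [φ, ψ, hx, (hg x).1, (hg x).2, (hh x).1, (hh x).2]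
  rwa [hφg, hψh] at key

theorem eq_posPartCc_sub_negPartCc (hρ : IsQuasiIntegral ρ) (k : C_c(X, ℝ)) :
    ρ k = ρ (posPartCc k) - ρ (negPartCc k) := by
  let φ : C(ℝ, ℝ) := ⟨fun s => min s 0, by fun_prop⟩
  have hφ : compCc φ (by simp [φ]) k = (-1 : ℝ) • negPartCc k := by
    ext x
    rcases le_total (k x) 0 with hx | hx <;> simp [φ, hx]
  rw [hρ.eq_add_of_comp k (φ := ⟨fun s => max s 0, by fun_prop⟩) (ψ := φ) (by simp) (by simp [φ])
    fun s => by rcases le_total s 0 with hs | hs <;> simp [φ, hs], hφ, hρ.smul]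
  simp only [posPartCc]
  ring

end IsQuasiIntegral

end QuasiIntegral

section QiMeas

variable {X : Type*} [TopologicalSpace X] {ρ : C_c(X, ℝ) → ℝ}

theorem qiMeas_of_isOpen (ρ : C_c(X, ℝ) → ℝ) {U : Set X} (hU : IsOpen U) :
    qiMeas ρ U = qiOpen ρ U :=
  if_pos hU

theorem qiOpen_mono (ρ : C_c(X, ℝ) → ℝ) {U V : Set X} (h : U ⊆ V) :
    qiOpen ρ U ≤ qiOpen ρ V :=
  iSup₂_mono' fun f hf => ⟨f, ⟨hf.1, hf.2.trans h⟩, le_rfl⟩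

theorem qiMeas_eq_iInf (ρ : C_c(X, ℝ) → ℝ) (S : Set X) :
    qiMeas ρ S = ⨅ (U : Set X) (_ : IsOpen U ∧ S ⊆ U), qiOpen ρ U := by
  by_cases hS : IsOpen S
  · rw [qiMeas_of_isOpen ρ hS]
    exact le_antisymm (le_iInf₂ fun U hU => qiOpen_mono ρ hU.2) (iInf₂_le S ⟨hS, subset_rfl⟩)
  · exact if_neg hS

theorem qiMeas_mono (ρ : C_c(X, ℝ) → ℝ) {S T : Set X} (h : S ⊆ T) :
    qiMeas ρ S ≤ qiMeas ρ T := by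
  rw [qiMeas_eq_iInf, qiMeas_eq_iInf]
  exact le_iInf₂ fun U hU => iInf₂_le U ⟨hU.1, h.trans hU.2⟩

theorem ofReal_le_qiOpen (ρ : C_c(X, ℝ) → ℝ) {U : Set X} {f : C_c(X, ℝ)}
    (hf : ∀ x, 0 ≤ f x ∧ f x ≤ 1) (hfU : tsupport f ⊆ U) :
    ENNReal.ofReal (ρ f) ≤ qiOpen ρ U :=
  le_iSup₂ (f := fun (f : C_c(X, ℝ)) (_ : (∀ x, 0 ≤ f x ∧ f x ≤ 1) ∧ tsupport f ⊆ U) =>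
    ENNReal.ofReal (ρ f)) f ⟨hf, hfU⟩

theorem IsQuasiIntegral.ofReal_le_mul_qiOpen (hρ : IsQuasiIntegral ρ) {U : Set X}
    {k : C_c(X, ℝ)} {M : ℝ} (hM : 0 < M) (hk : ∀ x, 0 ≤ k x ∧ k x ≤ M)
    (hkU : tsupport k ⊆ U) :
    ENNReal.ofReal (ρ k) ≤ ENNReal.ofReal M * qiOpen ρ U := by
  have hscaled : ENNReal.ofReal (ρ (M⁻¹ • k)) ≤ qiOpen ρ U := by
    have hsupp : tsupport (M⁻¹ • k) ⊆ tsupport k :=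
      closure_mono fun x hx => by simp_all [Function.mem_support]
    refine ofReal_le_qiOpen ρ (fun x => ?_) (hsupp.trans hkU)
    simp only [CompactlySupportedContinuousMap.smul_apply, smul_eq_mul]
    exact ⟨mul_nonneg (inv_nonneg.2 hM.le) (hk x).1,
      by rw [inv_mul_le_iff₀ hM, mul_one]; exact (hk x).2⟩
  have hk_eq : ρ k = M * ρ (M⁻¹ • k) := by rw [hρ.smul]; field_simp
  rw [hk_eq, ENNReal.ofReal_mul hM.le]
  exact mul_le_mul_right hscaled _

end QiMeas

namespace IsTopMeasure

variable {X : Type*} [TopologicalSpace X] {μ : Set X → ℝ≥0∞}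

theorem mono_isCompact_isOpen (hμ : IsTopMeasure μ) {K U : Set X} (hK : IsCompact K)
    (hU : IsOpen U) (h : K ⊆ U) : μ K ≤ μ U := by
  rw [hμ.2.1 U hU]
  exact le_iSup₂ (f := fun (K : Set X) (_ : IsCompact K ∧ K ⊆ U) => μ K) K ⟨hK, h⟩

theorem mono_isOpen (hμ : IsTopMeasure μ) {U V : Set X} (hU : IsOpen U) (hV : IsOpen V)
    (h : U ⊆ V) : μ U ≤ μ V := by
  rw [hμ.2.1 U hU]
  exact iSup₂_le fun K hK => hμ.mono_isCompact_isOpen hK.1 hV (hK.2.trans h)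

theorem mono_isClosed_isOpen (hμ : IsTopMeasure μ) {F U : Set X} (hF : IsClosed F)
    (hU : IsOpen U) (h : F ⊆ U) : μ F ≤ μ U := by
  rw [hμ.2.2 F hF]
  exact iInf₂_le U ⟨hU, h⟩

theorem mono_isOpen_isClosed (hμ : IsTopMeasure μ) {U F : Set X} (hU : IsOpen U)
    (hF : IsClosed F) (h : U ⊆ F) : μ U ≤ μ F := by
  rw [hμ.2.1 U hU, hμ.2.2 F hF]
  exact iSup₂_le fun K hK => le_iInf₂ fun V hV =>
    hμ.mono_isCompact_isOpen hK.1 hV.1 (hK.2.trans (h.trans hV.2))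

theorem univ_eq_add_compl [T2Space X] (hμ : IsTopMeasure μ) {K : Set X} (hK : IsCompact K) :
    μ Set.univ = μ K + μ Kᶜ := by
  simpa using hμ.1 K Kᶜ disjoint_compl_right (.inl hK) (.inr hK.isClosed.isOpen_compl)
    (.inr (by simp))

theorem eq_diff_add [T2Space X] (hμ : IsTopMeasure μ) {U K : Set X} (hU : IsOpen U)
    (hK : IsCompact K) (hKU : K ⊆ U) : μ U = μ (U \ K) + μ K := by
  have h := hμ.1 (U \ K) K Set.disjoint_sdiff_left (.inr (hU.sdiff hK.isClosed)) (.inl hK)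
    (.inr (by rwa [Set.sdiff_union_of_subset hKU]))
  rwa [Set.sdiff_union_of_subset hKU] at h

end IsTopMeasure

namespace IsSimpleTM

variable {X : Type*} [TopologicalSpace X] {μ : Set X → ℝ≥0∞}

theorem empty (hμ : IsSimpleTM μ) : μ ∅ = 0 := by
  have h := hμ.1.1 ∅ ∅ (disjoint_bot_left) (.inr isOpen_empty) (.inr isOpen_empty)
    (.inr (by simp))
  rw [Set.union_empty] at h
  rcases hμ.2 ∅ (.inl isOpen_empty) with h0 | h1
  · exact h0
  · norm_num [h1] at h

theorem eq_one_of_le (hμ : IsSimpleTM μ) {A B : Set X} (hB : IsOpen B ∨ IsClosed B)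
    (hAB : μ A ≤ μ B) (hA : μ A = 1) : μ B = 1 :=
  (hμ.2 B hB).resolve_left fun h0 => by simp [hA, h0] at hAB

theorem exists_isCompact_eq_one [T2Space X] (hμ : IsSimpleTM μ) {U : Set X} (hU : IsOpen U)
    (h1 : μ U = 1) : ∃ K, IsCompact K ∧ K ⊆ U ∧ μ K = 1 := by
  have hpos : (0 : ℝ≥0∞) < μ U := by simp [h1]
  rw [hμ.1.2.1 U hU] at hpos
  obtain ⟨K, hK⟩ := lt_iSup_iff.mp hpos
  obtain ⟨⟨hKc, hKU⟩, hKpos⟩ := lt_iSup_iff.mp hK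
  exact ⟨K, hKc, hKU, (hμ.2 K (.inr hKc.isClosed)).resolve_left hKpos.ne'⟩

theorem exists_isOpen_eq_zero (hμ : IsSimpleTM μ) {F : Set X} (hF : IsClosed F)
    (h0 : μ F = 0) : ∃ U, IsOpen U ∧ F ⊆ U ∧ μ U = 0 := by
  have hlt : μ F < 1 := by simp [h0]
  rw [hμ.1.2.2 F hF] at hlt
  obtain ⟨U, hU⟩ := iInf_lt_iff.mp hlt
  obtain ⟨⟨hUo, hFU⟩, hUlt⟩ := iInf_lt_iff.mp hU
  exact ⟨U, hUo, hFU, (hμ.2 U (.inl hUo)).resolve_right hUlt.ne⟩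

theorem eq_zero_of_disjoint (hμ : IsSimpleTM μ) {U V : Set X} (hU : IsOpen U) (hV : IsOpen V)
    (hUV : Disjoint U V) (hU1 : μ U = 1) : μ V = 0 := by
  have h := hμ.1.1 U V hUV (.inr hU) (.inr hV) (.inr (hU.union hV))
  refine (hμ.2 V (.inl hV)).resolve_right fun hV1 => ?_
  rcases hμ.2 (U ∪ V) (.inl (hU.union hV)) with h' | h' <;> norm_num [h', hU1, hV1] at h

end IsSimpleTM

section Value

variable {X : Type*} [TopologicalSpace X] {μ : Set X → ℝ≥0∞}

noncomputable def upperValue (μ : Set X → ℝ≥0∞) (k : C_c(X, ℝ)) : ℝ :=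
  sSup (insert 0 {t : ℝ | 0 < t ∧ μ {x | t < k x} = 1})

/-- For a simple `μ` with `μ univ = 1` this is the point at which `k` is concentrated:
`μ {x | |k x - value μ k| < δ} = 1` for every `δ > 0` (`measure_band_eq_one`). -/
noncomputable def value (μ : Set X → ℝ≥0∞) (k : C_c(X, ℝ)) : ℝ :=
  upperValue μ (posPartCc k) - upperValue μ (negPartCc k)

theorem isOpen_levelSet (k : C_c(X, ℝ)) (t : ℝ) : IsOpen {x | t < k x} :=
  isOpen_lt continuous_const k.continuous

theorem isOpen_band (k : C_c(X, ℝ)) (a b : ℝ) : IsOpen {x | a < k x ∧ k x < b} :=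
  (isOpen_levelSet k a).inter (isOpen_lt k.continuous continuous_const)

theorem levelSet_posPartCc (k : C_c(X, ℝ)) {t : ℝ} (ht : 0 < t) :
    {x | t < posPartCc k x} = {x | t < k x} := by
  ext x
  simp [ht.not_gt]

theorem levelSet_negPartCc (k : C_c(X, ℝ)) {t : ℝ} (ht : 0 < t) :
    {x | t < negPartCc k x} = {x | k x < -t} := by
  ext x
  simp [ht.not_gt, lt_neg]

noncomputable def negCc (k : C_c(X, ℝ)) : C_c(X, ℝ) :=
  compCc ⟨fun s => -s, continuous_neg⟩ neg_zero k

@[simp]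
theorem negCc_apply (k : C_c(X, ℝ)) (x : X) : negCc k x = -k x := rfl

theorem value_negCc (μ : Set X → ℝ≥0∞) (k : C_c(X, ℝ)) : value μ (negCc k) = -value μ k := by
  have hpos : posPartCc (negCc k) = negPartCc k := by ext x; simp
  have hneg : negPartCc (negCc k) = posPartCc k := by ext x; simp
  simp only [value, hpos, hneg, neg_sub]

namespace IsSimpleTM

variable (hμ : IsSimpleTM μ)
include hμ

theorem levelSet_eq_empty {k : C_c(X, ℝ)} {M t : ℝ} (hk : ∀ x, k x ≤ M) (hMt : M ≤ t) :
    μ {x | t < k x} = 0 := by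
  rw [show {x | t < k x} = ∅ from Set.eq_empty_of_forall_notMem fun x hx =>
    (hk x).not_gt (hMt.trans_lt hx), hμ.empty]

theorem upperValue_le {k : C_c(X, ℝ)} {M : ℝ} (hM : 0 ≤ M) (hk : ∀ x, k x ≤ M) :
    upperValue μ k ≤ M := by
  refine csSup_le (Set.insert_nonempty _ _) fun t ht => ?_
  rcases ht with rfl | ⟨-, ht1⟩
  · exact hM
  · by_contra hMt
    simp [hμ.levelSet_eq_empty hk (not_le.1 hMt).le] at ht1

theorem bddAbove_levels (k : C_c(X, ℝ)) :
    BddAbove (insert 0 {t : ℝ | 0 < t ∧ μ {x | t < k x} = 1}) := by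
  obtain ⟨M, hM, hk⟩ := exists_pos_upper_bound k
  refine ⟨M, fun t ht => ?_⟩
  rcases ht with rfl | ⟨-, ht1⟩
  · exact hM.le
  · by_contra hMt
    simp [hμ.levelSet_eq_empty hk (not_le.1 hMt).le] at ht1

theorem upperValue_nonneg (k : C_c(X, ℝ)) : 0 ≤ upperValue μ k :=
  le_csSup (hμ.bddAbove_levels k) (Set.mem_insert _ _)

theorem le_upperValue {k : C_c(X, ℝ)} {t : ℝ} (ht : 0 < t) (h1 : μ {x | t < k x} = 1) :
    t ≤ upperValue μ k :=
  le_csSup (hμ.bddAbove_levels k) (Set.mem_insert_of_mem _ ⟨ht, h1⟩)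

theorem levelSet_eq_one {k : C_c(X, ℝ)} {t : ℝ} (ht : 0 < t) (htk : t < upperValue μ k) :
    μ {x | t < k x} = 1 := by
  obtain ⟨s, hs, hts⟩ := exists_lt_of_lt_csSup (Set.insert_nonempty _ _) htk
  rcases hs with rfl | ⟨-, hs1⟩
  · exact absurd hts ht.not_gt
  · exact hμ.eq_one_of_le (.inl (isOpen_levelSet k t))
      (hμ.1.mono_isOpen (isOpen_levelSet k s) (isOpen_levelSet k t) fun x hx => hts.trans hx) hs1

theorem levelSet_eq_zero {k : C_c(X, ℝ)} {t : ℝ} (htk : upperValue μ k < t) :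
    μ {x | t < k x} = 0 :=
  (hμ.2 _ (.inl (isOpen_levelSet k t))).resolve_right fun h1 =>
    (hμ.le_upperValue ((hμ.upperValue_nonneg k).trans_lt htk) h1).not_gt htk

theorem upperValue_eq_zero_of_nonpos {k : C_c(X, ℝ)} (hk : ∀ x, k x ≤ 0) :
    upperValue μ k = 0 :=
  (hμ.upperValue_le le_rfl hk).antisymm (hμ.upperValue_nonneg k)

theorem upperValue_le_add {k l : C_c(X, ℝ)} {e : ℝ} (he : 0 ≤ e) (h : ∀ x, k x ≤ l x + e) :
    upperValue μ k ≤ upperValue μ l + e := by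
  refine csSup_le (Set.insert_nonempty _ _) fun t ht => ?_
  have hl := hμ.upperValue_nonneg l
  rcases ht with rfl | ⟨ht, ht1⟩
  · linarith
  rcases le_or_gt t e with hte | hte
  · linarith
  have hsub : {x | t < k x} ⊆ {x | t - e < l x} := fun x hx => by
    simp only [Set.mem_ofPred_eq] at hx ⊢; linarith [h x]
  have := hμ.le_upperValue (sub_pos.2 hte) (hμ.eq_one_of_le (.inl (isOpen_levelSet l _))
    (hμ.1.mono_isOpen (isOpen_levelSet k t) (isOpen_levelSet l _) hsub) ht1)
  linarith

theorem upperValue_eq_of_eq_on {k : C_c(X, ℝ)} {a : ℝ} {C : Set X} (ha : 0 ≤ a)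
    (hk : ∀ x, k x ≤ a) (hC : IsCompact C) (hC1 : μ C = 1) (hkC : ∀ x ∈ C, k x = a) :
    upperValue μ k = a := by
  refine (hμ.upperValue_le ha hk).antisymm (le_of_forall_lt_imp_le_of_dense fun t hta => ?_)
  rcases le_or_gt t 0 with ht | ht
  · exact ht.trans (hμ.upperValue_nonneg k)
  refine hμ.le_upperValue ht (hμ.eq_one_of_le (.inl (isOpen_levelSet k t))
    (hμ.1.mono_isCompact_isOpen hC (isOpen_levelSet k t) fun x hx => ?_) hC1)
  simpa [hkC x hx] using hta

theorem value_of_nonneg {k : C_c(X, ℝ)} (hk : ∀ x, 0 ≤ k x) : value μ k = upperValue μ k := by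
  have hpos : posPartCc k = k := by ext x; simp [hk x]
  rw [value, hpos, hμ.upperValue_eq_zero_of_nonpos (k := negPartCc k) fun x => by simp [hk x],
    sub_zero]

theorem not_upperValue_pos_and_pos (k : C_c(X, ℝ)) :
    ¬(0 < upperValue μ (posPartCc k) ∧ 0 < upperValue μ (negPartCc k)) := by
  rintro ⟨hp, hn⟩
  have h1 := hμ.levelSet_eq_one (half_pos hp) (half_lt_self hp)
  have h2 := hμ.levelSet_eq_one (half_pos hn) (half_lt_self hn)
  rw [levelSet_posPartCc k (half_pos hp)] at h1
  rw [levelSet_negPartCc k (half_pos hn)] at h2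
  have hdisj : Disjoint {x | upperValue μ (posPartCc k) / 2 < k x}
      {x | k x < -(upperValue μ (negPartCc k) / 2)} :=
    Set.disjoint_left.2 fun x hx hx' => by
      simp only [Set.mem_ofPred_eq] at hx hx'; linarith
  simpa [h2] using hμ.eq_zero_of_disjoint (isOpen_levelSet k _)
    (isOpen_lt k.continuous continuous_const) hdisj h1

theorem upperValue_eq_of_value_pos {k : C_c(X, ℝ)} (ha : 0 < value μ k) :
    upperValue μ (posPartCc k) = value μ k ∧ upperValue μ (negPartCc k) = 0 := by
  have hn : upperValue μ (negPartCc k) = 0 := by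
    refine ((hμ.upperValue_nonneg _).eq_or_lt.resolve_right fun hn => ?_).symm
    exact hμ.not_upperValue_pos_and_pos k ⟨by unfold value at ha; linarith, hn⟩
  exact ⟨by simp [value, hn], hn⟩

theorem value_eq_zero_of_univ (hX : μ Set.univ = 0) (k : C_c(X, ℝ)) : value μ k = 0 := by
  have hzero : ∀ l : C_c(X, ℝ), upperValue μ l = 0 := fun l =>
    le_antisymm (csSup_le (Set.insert_nonempty _ _) fun t ht => by
      rcases ht with rfl | ⟨-, ht1⟩
      · exact le_rfl
      · have := hμ.1.mono_isOpen (isOpen_levelSet l t) isOpen_univ (Set.subset_univ _)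
        simp [ht1, hX] at this) (hμ.upperValue_nonneg l)
  simp [value, hzero]

theorem abs_value_sub_le {k l : C_c(X, ℝ)} {e : ℝ} (he : 0 ≤ e) (h : ∀ x, |k x - l x| ≤ e) :
    |value μ k - value μ l| ≤ 2 * e := by
  have parts : ∀ k l : C_c(X, ℝ), (∀ x, |k x - l x| ≤ e) →
      upperValue μ (posPartCc k) ≤ upperValue μ (posPartCc l) + e ∧
      upperValue μ (negPartCc k) ≤ upperValue μ (negPartCc l) + e := fun k l h =>
    ⟨hμ.upperValue_le_add he fun x => by
      have := (abs_max_sub_max_le_abs (k x) (l x) 0).trans (h x)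
      simp only [posPartCc_apply]; linarith [(abs_le.1 this).2],
    hμ.upperValue_le_add he fun x => by
      have := (abs_max_sub_max_le_abs (-k x) (-l x) 0).trans_eq (by rw [neg_sub_neg, abs_sub_comm])
      simp only [negPartCc_apply]; linarith [(abs_le.1 (this.trans (h x))).2]⟩
  have h₁ := parts k l h
  have h₂ := parts l k fun x => by rw [abs_sub_comm]; exact h x
  rw [value, value, abs_le]
  constructor <;> linarith [h₁.1, h₁.2, h₂.1, h₂.2]

end IsSimpleTM

end Value

section AlmostSimple

variable {X : Type*} [TopologicalSpace X] {ρ : C_c(X, ℝ) → ℝ}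

namespace IsQuasiIntegral

variable (hρ : IsQuasiIntegral ρ)
include hρ

/-- `min k t / t` equals `1` on the support of every competitor `g` in `qiOpen ρ {t < k}`, and
`t • (min k t / t) ≤ k` inside `B(k)`. -/
theorem ofReal_mul_qiOpen_levelSet_le {k : C_c(X, ℝ)} (hk : ∀ x, 0 ≤ k x) {t : ℝ}
    (ht : 0 < t) : ENNReal.ofReal t * qiOpen ρ {x | t < k x} ≤ ENNReal.ofReal (ρ k) := by
  unfold qiOpen
  simp only [ENNReal.mul_iSup]
  refine iSup₂_le fun g ⟨hg, hgU⟩ => ?_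
  rw [← ENNReal.ofReal_mul ht.le]
  refine ENNReal.ofReal_le_ofReal ?_
  let ψ : C(ℝ, ℝ) := ⟨fun s => min s t / t, by fun_prop⟩
  have hψ0 : ψ 0 = 0 := by simp [ψ, ht.le]
  have hh : ∀ x, 0 ≤ compCc ψ hψ0 k x ∧ compCc ψ hψ0 k x ≤ 1 := fun x => by
    simp only [compCc_apply, ψ, ContinuousMap.coe_mk]
    exact ⟨div_nonneg (le_min (hk x) ht.le) ht.le, (div_le_one ht).2 (min_le_right _ _)⟩
  have hg_le : ρ g ≤ ρ (compCc ψ hψ0 k) := hρ.le_of_eq_one_on_tsupport hg hh fun x hx => by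
    have htk : t < k x := hgU hx
    simp [ψ, htk.le, ht.ne']
  have hmin : t • compCc ψ hψ0 k = compCc ⟨fun s => min s t, by fun_prop⟩ (by simp [ht.le]) k := by
    ext x
    simp [ψ, mul_div_cancel₀ _ ht.ne']
  have hmin_le : ρ (compCc ⟨fun s => min s t, by fun_prop⟩ (by simp [ht.le]) k) ≤ ρ k := by
    simpa using hρ.comp_mono k (ψ := ContinuousMap.id ℝ) _ rfl (fun x => min_le_left _ _)
  calc t * ρ g ≤ t * ρ (compCc ψ hψ0 k) := mul_le_mul_of_nonneg_left hg_le ht.le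
    _ = ρ (compCc ⟨fun s => min s t, by fun_prop⟩ (by simp [ht.le]) k) := by
      rw [← hmin, hρ.smul]
    _ ≤ ρ k := hmin_le

/-- Split `k = min k q + (k - q)⁺`; the second summand is supported in a `qiOpen`-null set. -/
theorem ofReal_le_mul_qiOpen_univ {k : C_c(X, ℝ)} (hk : ∀ x, 0 ≤ k x) {s q : ℝ} (hq : 0 < q)
    (hsq : s < q) (h0 : qiOpen ρ {x | s < k x} = 0) :
    ENNReal.ofReal (ρ k) ≤ ENNReal.ofReal q * qiOpen ρ Set.univ := by
  obtain ⟨M, hM, hkM⟩ := exists_pos_upper_bound k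
  let φ : C(ℝ, ℝ) := ⟨fun s => min s q, by fun_prop⟩
  let ψ : C(ℝ, ℝ) := ⟨fun s => max (s - q) 0, by fun_prop⟩
  have hφ0 : φ 0 = 0 := by simp [φ, hq.le]
  have hψ0 : ψ 0 = 0 := by simp [ψ, hq.le]
  have hsplit := hρ.eq_add_of_comp k hφ0 hψ0 fun s => by
    rcases le_total s q with h | h <;> simp [φ, ψ, h]
  have hψ_supp : tsupport (compCc ψ hψ0 k) ⊆ {x | s < k x} := by
    refine closure_minimal (fun x hx => ?_) (isClosed_le continuous_const k.continuous)
      |>.trans fun x (hx : q ≤ k x) => hsq.trans_le hx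
    by_contra hxq
    exact hx (by simp [ψ, (lt_of_not_ge (show ¬q ≤ k x from hxq)).le])
  have hψ_le : ρ (compCc ψ hψ0 k) ≤ 0 := by
    have := hρ.ofReal_le_mul_qiOpen hM (fun x => ⟨le_max_right _ _,
      max_le (by linarith [hkM x]) hM.le⟩) hψ_supp
    rw [h0, mul_zero, nonpos_iff_eq_zero, ENNReal.ofReal_eq_zero] at this
    exact this
  have hφ_le := hρ.ofReal_le_mul_qiOpen hq (k := compCc φ hφ0 k)
    (fun x => ⟨le_min (hk x) hq.le, min_le_right _ _⟩) (Set.subset_univ _)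
  exact (ENNReal.ofReal_le_ofReal (by linarith)).trans hφ_le

end IsQuasiIntegral

/-- `IsAlmostSimpleQI` with the scalar `c` and the simple topological measure `μ` fixed. -/
structure IsAlmostSimpleQIWith (ρ : C_c(X, ℝ) → ℝ) (c : ℝ≥0∞) (μ : Set X → ℝ≥0∞) : Prop where
  pos : 0 < c
  ne_top : c ≠ ∞
  simple : IsSimpleTM μ
  qiMeas_eq : ∀ A : Set X, IsOpen A ∨ IsClosed A → qiMeas ρ A = c * μ A

namespace IsAlmostSimpleQIWith

variable {c : ℝ≥0∞} {μ : Set X → ℝ≥0∞} (hs : IsAlmostSimpleQIWith ρ c μ)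
include hs

theorem toReal_pos : 0 < c.toReal := ENNReal.toReal_pos hs.pos.ne' hs.ne_top

theorem qiOpen_eq {U : Set X} (hU : IsOpen U) : qiOpen ρ U = c * μ U := by
  rw [← qiMeas_of_isOpen ρ hU, hs.qiMeas_eq U (.inl hU)]

theorem qiMeas_eq_iff {A : Set X} (hA : IsOpen A ∨ IsClosed A) : qiMeas ρ A = c ↔ μ A = 1 := by
  rw [hs.qiMeas_eq A hA]
  rcases hs.simple.2 A hA with h | h <;> simp [h, hs.pos.ne]

theorem eq_mul_upperValue (hρ : IsQuasiIntegral ρ) {k : C_c(X, ℝ)} (hk : ∀ x, 0 ≤ k x) :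
    ρ k = c.toReal * upperValue μ k := by
  have hc := hs.toReal_pos
  have hp := hs.simple.upperValue_nonneg k
  refine le_antisymm (le_of_forall_gt_imp_ge_of_dense fun a ha => ?_)
    (le_of_forall_lt_imp_le_of_dense fun a ha => ?_)
  · have hq : upperValue μ k < a / c.toReal := by rwa [lt_div_iff₀' hc]
    have h0 : qiOpen ρ {x | (upperValue μ k + a / c.toReal) / 2 < k x} = 0 := by
      rw [hs.qiOpen_eq (isOpen_levelSet k _), hs.simple.levelSet_eq_zero (by linarith), mul_zero]
    have huniv : qiOpen ρ Set.univ ≤ c := by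
      rw [hs.qiOpen_eq isOpen_univ]
      rcases hs.simple.2 _ (.inl isOpen_univ) with h | h <;> simp [h]
    have := (hρ.ofReal_le_mul_qiOpen_univ hk (hp.trans_lt hq) (by linarith) h0).trans
      (mul_le_mul_right huniv _)
    rwa [ENNReal.ofReal_le_iff_le_toReal (ENNReal.mul_ne_top ENNReal.ofReal_ne_top hs.ne_top),
      ENNReal.toReal_mul, ENNReal.toReal_ofReal (hp.trans_lt hq).le,
      div_mul_cancel₀ _ hc.ne'] at this
  · rcases le_or_gt a 0 with ha0 | ha0
    · exact ha0.trans (hρ.pos k hk)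
    have ht : 0 < a / c.toReal := div_pos ha0 hc
    have htp : a / c.toReal < upperValue μ k := by rwa [div_lt_iff₀' hc]
    have := hρ.ofReal_mul_qiOpen_levelSet_le hk ht
    rw [hs.qiOpen_eq (isOpen_levelSet k _), hs.simple.levelSet_eq_one ht htp, mul_one] at this
    have := ENNReal.toReal_mono ENNReal.ofReal_ne_top this
    rwa [ENNReal.toReal_mul, ENNReal.toReal_ofReal ht.le, ENNReal.toReal_ofReal (hρ.pos k hk),
      div_mul_cancel₀ _ hc.ne'] at this

theorem eq_mul_value (hρ : IsQuasiIntegral ρ) (k : C_c(X, ℝ)) : ρ k = c.toReal * value μ k := by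
  rw [hρ.eq_posPartCc_sub_negPartCc, hs.eq_mul_upperValue hρ (fun x => le_max_right _ _),
    hs.eq_mul_upperValue hρ (fun x => le_max_right _ _), value, mul_sub]

end IsAlmostSimpleQIWith

end AlmostSimple

section Concentration

variable {X : Type*} [TopologicalSpace X] {μ : Set X → ℝ≥0∞}

theorem isCompact_of_isClosed_of_ne_zero (k : C_c(X, ℝ)) {C : Set X} (hC : IsClosed C)
    (hk : ∀ x ∈ C, k x ≠ 0) : IsCompact C :=
  k.hasCompactSupport.of_isClosed_subset hC fun x hx => subset_tsupport _ (hk x hx)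

namespace IsSimpleTM

variable [T2Space X] (hμ : IsSimpleTM μ)
include hμ

/- A topological measure is additive only on compact or open pieces, and `{a + ε ≤ k}` is compact
only when `a + ε > 0`: this is why the sign of `value μ k` is split into cases. -/

theorem measure_band_eq_one_of_value_pos {k : C_c(X, ℝ)} (ha : 0 < value μ k) {δ : ℝ}
    (hδ : 0 < δ) : μ {x | value μ k - δ < k x ∧ k x < value μ k + δ} = 1 := by
  obtain ⟨hp, -⟩ := hμ.upperValue_eq_of_value_pos ha
  set a := value μ k
  set ε := min δ a / 2 with hε
  have hε0 : 0 < ε := by positivity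
  have hεδ : ε < δ := by have := min_le_left δ a; linarith
  have hεa : ε < a := by have := min_le_right δ a; linarith
  have hlow : μ {x | a - ε < k x} = 1 := by
    rw [← levelSet_posPartCc k (by linarith)]
    exact hμ.levelSet_eq_one (by linarith) (by linarith)
  have hC : IsCompact {x | a + ε ≤ k x} :=
    isCompact_of_isClosed_of_ne_zero k (isClosed_le continuous_const k.continuous)
      fun x (hx : a + ε ≤ k x) => by linarith
  have hC0 : μ {x | a + ε ≤ k x} = 0 := by
    have hhigh : μ {x | a + ε / 2 < k x} = 0 := by
      rw [← levelSet_posPartCc k (by linarith)]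
      exact hμ.levelSet_eq_zero (by linarith)
    refine le_antisymm ((hμ.1.mono_isCompact_isOpen hC (isOpen_levelSet k _) fun x hx => ?_).trans
      hhigh.le) zero_le
    simp only [Set.mem_ofPred_eq] at hx ⊢
    linarith
  have hsplit := hμ.1.eq_diff_add (isOpen_levelSet k _) hC fun x (hx : a + ε ≤ k x) =>
    show a - ε < k x by linarith
  rw [hlow, hC0, add_zero] at hsplit
  refine hμ.eq_one_of_le (.inl (isOpen_band k _ _)) (hμ.1.mono_isOpen
    ((isOpen_levelSet k _).sdiff hC.isClosed) (isOpen_band k _ _) fun x hx => ?_) hsplit.symm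
  simp only [Set.mem_sdiff, Set.mem_ofPred_eq, not_le] at hx ⊢
  constructor <;> linarith

theorem measure_band_eq_one_of_value_eq_zero (hX : μ Set.univ = 1) {k : C_c(X, ℝ)}
    (ha : value μ k = 0) {δ : ℝ} (hδ : 0 < δ) :
    μ {x | value μ k - δ < k x ∧ k x < value μ k + δ} = 1 := by
  have hboth : upperValue μ (posPartCc k) = 0 ∧ upperValue μ (negPartCc k) = 0 := by
    have heq : upperValue μ (posPartCc k) = upperValue μ (negPartCc k) := by
      unfold value at ha; linarith
    rcases (hμ.upperValue_nonneg (posPartCc k)).eq_or_lt with h | h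
    · exact ⟨h.symm, heq ▸ h.symm⟩
    · exact absurd ⟨h, heq ▸ h⟩ (hμ.not_upperValue_pos_and_pos k)
  have hhigh : μ {x | δ / 2 < k x} = 0 := by
    rw [← levelSet_posPartCc k (by linarith)]
    exact hμ.levelSet_eq_zero (by rw [hboth.1]; linarith)
  have hlow : μ {x | k x < -(δ / 2)} = 0 := by
    rw [← levelSet_negPartCc k (by linarith)]
    exact hμ.levelSet_eq_zero (by rw [hboth.2]; linarith)
  have hOpen₁ := isOpen_levelSet k (δ / 2)
  have hOpen₂ : IsOpen {x | k x < -(δ / 2)} := isOpen_lt k.continuous continuous_const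
  have hdisj : Disjoint {x | δ / 2 < k x} {x | k x < -(δ / 2)} :=
    Set.disjoint_left.2 fun x (h₁ : δ / 2 < k x) (h₂ : k x < -(δ / 2)) => by linarith
  have hunion : μ ({x | δ / 2 < k x} ∪ {x | k x < -(δ / 2)}) = 0 := by
    rw [hμ.1.1 _ _ hdisj (.inr hOpen₁) (.inr hOpen₂) (.inr (hOpen₁.union hOpen₂)), hhigh, hlow,
      add_zero]
  set C := {x | δ ≤ |k x|}
  have hC : IsCompact C := isCompact_of_isClosed_of_ne_zero k
    (isClosed_le continuous_const k.continuous.abs) fun x (hx : δ ≤ |k x|) h0 => by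
      simp [h0] at hx; linarith
  have hC0 : μ C = 0 := by
    refine le_antisymm ((hμ.1.mono_isCompact_isOpen hC (hOpen₁.union hOpen₂) fun x hx => ?_).trans
      hunion.le) zero_le
    rcases le_abs'.1 (show δ ≤ |k x| from hx) with h | h
    · exact .inr (show k x < -(δ / 2) by linarith)
    · exact .inl (show δ / 2 < k x by linarith)
  have hsplit := hμ.1.univ_eq_add_compl hC
  rw [hX, hC0, zero_add] at hsplit
  convert hsplit.symm using 2
  ext x
  simp [C, ha, abs_lt]

theorem measure_band_eq_one (hX : μ Set.univ = 1) (k : C_c(X, ℝ)) {δ : ℝ} (hδ : 0 < δ) :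
    μ {x | value μ k - δ < k x ∧ k x < value μ k + δ} = 1 := by
  rcases lt_trichotomy (value μ k) 0 with hneg | hzero | hpos
  · have h := hμ.measure_band_eq_one_of_value_pos (k := negCc k)
      (by rw [value_negCc]; linarith) hδ
    convert h using 2
    ext x
    simp only [value_negCc, negCc_apply, Set.mem_ofPred_eq]
    constructor <;> rintro ⟨h₁, h₂⟩ <;> constructor <;> linarith
  · exact hμ.measure_band_eq_one_of_value_eq_zero hX hzero hδ
  · exact hμ.measure_band_eq_one_of_value_pos hpos hδ

theorem measure_preimage_eq_zero (hX : μ Set.univ = 1) (k : C_c(X, ℝ)) {F : Set ℝ}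
    (hF : IsClosed F) (hkF : value μ k ∉ F) : μ (k ⁻¹' F) = 0 := by
  obtain ⟨δ, hδ, hball⟩ := Metric.isOpen_iff.1 hF.isOpen_compl _ hkF
  obtain ⟨C, hC, hCband, hC1⟩ :=
    hμ.exists_isCompact_eq_one (isOpen_band k _ _) (hμ.measure_band_eq_one hX k hδ)
  have hsplit := hμ.1.univ_eq_add_compl hC
  rw [hX, hC1] at hsplit
  have hCc : μ Cᶜ = 0 := by
    by_contra hne
    simpa [← hsplit] using ENNReal.lt_add_right ENNReal.one_ne_top hne
  refine le_antisymm ((hμ.1.mono_isClosed_isOpen (hF.preimage k.continuous)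
    hC.isClosed.isOpen_compl fun x hx hxC => ?_).trans hCc.le) zero_le
  obtain ⟨h₁, h₂⟩ := hCband hxC
  exact hball (by rw [Real.ball_eq_Ioo]; exact ⟨h₁, h₂⟩) hx

theorem upperValue_comp (hX : μ Set.univ = 1) (k : C_c(X, ℝ)) {ψ : C(ℝ, ℝ)} (hψ0 : ψ 0 = 0)
    (hψ : ∀ s, 0 ≤ ψ s) : upperValue μ (compCc ψ hψ0 k) = ψ (value μ k) := by
  refine le_antisymm (not_lt.1 fun hlt => ?_) (le_of_forall_lt_imp_le_of_dense fun t ht => ?_)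
  · obtain ⟨t, hψt, htu⟩ := exists_between hlt
    have h1 := hμ.levelSet_eq_one ((hψ _).trans_lt hψt) htu
    have h0 := hμ.measure_preimage_eq_zero hX k (isClosed_Ici.preimage ψ.continuous)
      (show ¬t ≤ ψ (value μ k) from not_le.2 hψt)
    have := hμ.1.mono_isOpen_isClosed (isOpen_levelSet (compCc ψ hψ0 k) t)
      ((isClosed_Ici.preimage ψ.continuous).preimage k.continuous)
      fun x (hx : t < ψ (k x)) => show t ≤ ψ (k x) from hx.le
    rw [h1] at this
    exact absurd (this.trans_eq h0) (by norm_num)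
  · rcases le_or_gt t 0 with ht0 | ht0
    · exact ht0.trans (hμ.upperValue_nonneg _)
    obtain ⟨δ, hδ, hball⟩ := Metric.isOpen_iff.1 (isOpen_Ioi.preimage ψ.continuous) _
      (show t < ψ (value μ k) from ht)
    refine hμ.le_upperValue ht0 (hμ.eq_one_of_le (.inl (isOpen_levelSet _ t))
      (hμ.1.mono_isOpen (isOpen_band k _ _) (isOpen_levelSet _ t) fun x hx => ?_)
      (hμ.measure_band_eq_one hX k hδ))
    exact hball (by rw [Real.ball_eq_Ioo]; exact hx)

theorem value_comp (hX : μ Set.univ = 1) (k : C_c(X, ℝ)) {φ : C(ℝ, ℝ)} (hφ0 : φ 0 = 0) :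
    value μ (compCc φ hφ0 k) = φ (value μ k) := by
  let φp : C(ℝ, ℝ) := ⟨fun s => max (φ s) 0, by fun_prop⟩
  let φn : C(ℝ, ℝ) := ⟨fun s => max (-φ s) 0, by fun_prop⟩
  have hpos : posPartCc (compCc φ hφ0 k) = compCc φp (by simp [φp, hφ0]) k := rfl
  have hneg : negPartCc (compCc φ hφ0 k) = compCc φn (by simp [φn, hφ0]) k := rfl
  rw [value, hpos, hneg, hμ.upperValue_comp hX k _ fun s => le_max_right _ _,
    hμ.upperValue_comp hX k _ fun s => le_max_right _ _]
  rcases le_total (φ (value μ k)) 0 with h | h <;> simp [φp, φn, h]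

end IsSimpleTM

theorem IsAlmostSimpleQIWith.comp_eq_mul_value [T2Space X] {ρ : C_c(X, ℝ) → ℝ} {c : ℝ≥0∞}
    (hs : IsAlmostSimpleQIWith ρ c μ) (hρ : IsQuasiIntegral ρ) (k : C_c(X, ℝ)) {φ : C(ℝ, ℝ)}
    (hφ0 : φ 0 = 0) : ρ (compCc φ hφ0 k) = c.toReal * φ (value μ k) := by
  rw [hs.eq_mul_value hρ]
  rcases hs.simple.2 _ (.inl isOpen_univ) with hX | hX
  · simp [hs.simple.value_eq_zero_of_univ hX, hφ0]
  · rw [hs.simple.value_comp hX k hφ0]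

end Concentration

section Product

variable {X Y : Type*} [TopologicalSpace X] [T2Space X] [TopologicalSpace Y]
  {ρ : C_c(X, ℝ) → ℝ} {c : ℝ≥0∞} {μ : Set X → ℝ≥0∞}

@[simp]
theorem fiberY_apply (f : C_c(X × Y, ℝ)) (y : Y) (x : X) : fiberY f y x = f (x, y) := rfl

theorem fiberY_eq_zero {f : C_c(X × Y, ℝ)} {y : Y} (hy : y ∉ Prod.snd '' tsupport f) :
    fiberY f y = 0 := by
  ext x
  by_contra h
  exact hy ⟨(x, y), subset_tsupport _ h, rfl⟩

theorem exists_isOpen_abs_fiberY_sub_le (f : C_c(X × Y, ℝ)) (y₀ : Y) {ε : ℝ} (hε : 0 < ε) :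
    ∃ N : Set Y, IsOpen N ∧ y₀ ∈ N ∧ ∀ y ∈ N, ∀ x, |fiberY f y x - fiberY f y₀ x| ≤ ε := by
  have hK : IsCompact (Prod.fst '' tsupport f) := f.hasCompactSupport.image continuous_fst
  have hT : IsOpen {p : X × Y | |f p - f (p.1, y₀)| < ε} :=
    isOpen_lt (by fun_prop) continuous_const
  obtain ⟨u, v, -, hv, hKu, hy₀v, huv⟩ := generalized_tube_lemma hK isCompact_singleton hT
    fun ⟨x, y⟩ ⟨_, (hy : y = y₀)⟩ => by subst hy; simpa using hε
  refine ⟨v, hv, hy₀v rfl, fun y hy x => ?_⟩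
  by_cases hx : x ∈ Prod.fst '' tsupport f
  · exact (huv ⟨hKu hx, hy⟩).le
  · have hzero : ∀ y', f (x, y') = 0 := fun y' => by
      by_contra h
      exact hx ⟨(x, y'), subset_tsupport _ h, rfl⟩
    simp [hzero, hε.le]

theorem IsSimpleTM.continuous_value_fiberY (hμ : IsSimpleTM μ) (f : C_c(X × Y, ℝ)) :
    Continuous fun y => value μ (fiberY f y) := by
  refine Metric.continuous_iff'.2 fun y₀ ε hε => ?_
  obtain ⟨N, hN, hy₀N, hclose⟩ := exists_isOpen_abs_fiberY_sub_le f y₀ (by positivity : 0 < ε / 3)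
  filter_upwards [hN.mem_nhds hy₀N] with y hy
  rw [Real.dist_eq]
  have := hμ.abs_value_sub_le (k := fiberY f y) (l := fiberY f y₀) (e := ε / 3) (by positivity)
    (hclose y hy)
  linarith

namespace IsAlmostSimpleQIWith

variable [T2Space Y] (hs : IsAlmostSimpleQIWith ρ c μ) (hρ : IsQuasiIntegral ρ)
include hs hρ

/-- `T_ρ f` is continuous with compact support, so `TCc` takes its first branch. -/
theorem TCc_apply (f : C_c(X × Y, ℝ)) (y : Y) : TCc ρ f y = ρ (fiberY f y) := by
  have hT : Tmap ρ f = fun y => c.toReal * value μ (fiberY f y) :=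
    funext fun y => hs.eq_mul_value hρ _
  have hcont : Continuous (Tmap ρ f) :=
    hT ▸ continuous_const.mul (hs.simple.continuous_value_fiberY f)
  have hsupp : HasCompactSupport (Tmap ρ f) :=
    HasCompactSupport.intro (f.hasCompactSupport.image continuous_snd) fun y hy => by
      simp [Tmap, fiberY_eq_zero hy, hρ.map_zero]
  simp only [TCc, dif_pos (And.intro hcont hsupp)]
  rfl

theorem TCc_apply_of_comp {f g : C_c(X × Y, ℝ)} {φ : C(ℝ, ℝ)} (hφ0 : φ 0 = 0)
    (hg : ∀ p, g p = φ (f p)) (y : Y) :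
    TCc ρ g y = c.toReal * φ (value μ (fiberY f y)) := by
  have hfib : fiberY g y = compCc φ hφ0 (fiberY f y) := by ext x; simp [hg]
  rw [hs.TCc_apply hρ, hfib, hs.comp_eq_mul_value hρ]

theorem inB_TCc {f g : C_c(X × Y, ℝ)} (hg : InB f g) : InB (TCc ρ f) (TCc ρ g) := by
  obtain ⟨φ, hφ0, hg⟩ := hg
  refine ⟨⟨fun s => c.toReal * φ (s / c.toReal), by fun_prop⟩, by simp [hφ0], fun y => ?_⟩
  rw [hs.TCc_apply_of_comp hρ hφ0 hg, hs.TCc_apply hρ, hs.eq_mul_value hρ]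
  simp [mul_div_cancel_left₀ _ hs.toReal_pos.ne']

theorem TCc_add {f g h : C_c(X × Y, ℝ)} (hg : InB f g) (hh : InB f h) :
    TCc ρ (g + h) = TCc ρ g + TCc ρ h := by
  obtain ⟨φ, hφ0, hg⟩ := hg
  obtain ⟨ψ, hψ0, hh⟩ := hh
  ext y
  rw [CompactlySupportedContinuousMap.add_apply, hs.TCc_apply_of_comp hρ hφ0 hg,
    hs.TCc_apply_of_comp hρ hψ0 hh,
    hs.TCc_apply_of_comp hρ (f := f) (φ := φ + ψ) (by simp [hφ0, hψ0]) fun p => by simp [hg, hh]]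
  simp [mul_add]

theorem isQuasiIntegral_prodQI {η : C_c(Y, ℝ) → ℝ} (hη : IsQuasiIntegral η) :
    IsQuasiIntegral (prodQI η ρ) where
  smul a f := by
    have hT : TCc ρ (a • f) = a • TCc ρ f := by
      ext y
      have hfib : fiberY (a • f) y = a • fiberY f y := by ext x; simp
      simp [hs.TCc_apply hρ, hfib, hρ.smul]
    simp only [prodQI, hT, hη.smul]
  add f g h hg hh := by
    simp only [prodQI, hs.TCc_add hρ hg hh]
    exact hη.add _ _ _ (hs.inB_TCc hρ hg) (hs.inB_TCc hρ hh)
  pos f hf := hη.pos _ fun y => by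
    rw [hs.TCc_apply hρ]
    exact hρ.pos _ fun x => hf (x, y)

end IsAlmostSimpleQIWith

end Product

section OpenSets

/-- Split `a = (a - ε)⁺ + min a ε`: the first summand has closed support inside `W`, the second
is at most `ε` and supported in `U`. -/
theorem IsQuasiIntegral.ofReal_le_qiOpen_add_mul_qiOpen {Y : Type*} [TopologicalSpace Y]
    {η : C_c(Y, ℝ) → ℝ} (hη : IsQuasiIntegral η) {a : C_c(Y, ℝ)} {W U : Set Y}
    (ha : ∀ y, 0 ≤ a y ∧ a y ≤ 1) (haW : Function.support a ⊆ W) (haU : tsupport a ⊆ U)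
    {ε : ℝ} (hε : 0 < ε) :
    ENNReal.ofReal (η a) ≤ qiOpen η W + ENNReal.ofReal ε * qiOpen η U := by
  let φ : C(ℝ, ℝ) := ⟨fun s => max (s - ε) 0, by fun_prop⟩
  let ψ : C(ℝ, ℝ) := ⟨fun s => min s ε, by fun_prop⟩
  have hφ0 : φ 0 = 0 := by simp [φ, hε.le]
  have hψ0 : ψ 0 = 0 := by simp [ψ, hε.le]
  have hφW : tsupport (compCc φ hφ0 a) ⊆ W := by
    refine (closure_minimal (fun y hy => ?_) (isClosed_le continuous_const a.continuous)).trans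
      fun y (hy : ε ≤ a y) => haW (hε.trans_le hy).ne'
    by_contra hεy
    exact hy (by simp [φ, (lt_of_not_ge (show ¬ε ≤ a y from hεy)).le])
  have hφ := ofReal_le_qiOpen η (U := W) (f := compCc φ hφ0 a)
    (fun y => ⟨le_max_right _ _, max_le (by linarith [(ha y).2]) zero_le_one⟩) hφW
  have hψ := hη.ofReal_le_mul_qiOpen hε (k := compCc ψ hψ0 a)
    (fun y => ⟨le_min (ha y).1 hε.le, min_le_right _ _⟩)
    ((closure_mono fun y hy h0 => by simp [ψ, h0] at hy; linarith).trans haU)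
  calc ENNReal.ofReal (η a)
      = ENNReal.ofReal (η (compCc φ hφ0 a) + η (compCc ψ hψ0 a)) := by
        rw [hη.eq_add_of_comp a hφ0 hψ0 fun s => by
          rcases le_total s ε with h | h <;> simp [φ, ψ, h]]
    _ ≤ _ := ENNReal.ofReal_add_le.trans (add_le_add hφ hψ)

theorem IsQuasiIntegral.ofReal_le_qiOpen_of_support_subset {Y : Type*} [TopologicalSpace Y]
    {η : C_c(Y, ℝ) → ℝ} (hη : IsQuasiIntegral η) {a : C_c(Y, ℝ)} {W : Set Y}
    (ha : ∀ y, 0 ≤ a y ∧ a y ≤ 1) (haW : Function.support a ⊆ W)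
    (hfin : qiMeas η (tsupport a) ≠ ∞) : ENNReal.ofReal (η a) ≤ qiOpen η W := by
  rw [qiMeas_eq_iInf, ← lt_top_iff_ne_top] at hfin
  obtain ⟨U, hU⟩ := iInf_lt_iff.1 hfin
  obtain ⟨⟨-, haU⟩, hUfin⟩ := iInf_lt_iff.1 hU
  have hlim : Filter.Tendsto (fun ε => qiOpen η W + ENNReal.ofReal ε * qiOpen η U)
      (nhdsWithin 0 (Set.Ioi 0)) (nhds (qiOpen η W)) := by
    have h0 : Filter.Tendsto (fun ε => ENNReal.ofReal ε * qiOpen η U)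
        (nhdsWithin 0 (Set.Ioi 0)) (nhds 0) := by
      simpa using ENNReal.Tendsto.mul_const (ENNReal.tendsto_ofReal
        (tendsto_nhdsWithin_of_tendsto_nhds (s := Set.Ioi 0)
          (Filter.tendsto_id (x := nhds (0 : ℝ))))) (Or.inr hUfin.ne)
    simpa using tendsto_const_nhds.add h0
  exact ge_of_tendsto hlim (eventually_nhdsWithin_of_forall fun ε hε =>
    hη.ofReal_le_qiOpen_add_mul_qiOpen ha haW haU hε)

namespace IsAlmostSimpleQIWith

variable {X Y : Type*} [TopologicalSpace X] [T2Space X] [TopologicalSpace Y]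
  {ρ : C_c(X, ℝ) → ℝ} {η : C_c(Y, ℝ) → ℝ} {c : ℝ≥0∞} {μ : Set X → ℝ≥0∞}
  (hs : IsAlmostSimpleQIWith ρ c μ)
include hs

theorem isOpen_setOf_qiMeas_fiber_eq {A : Set (X × Y)} (hA : IsOpen A) :
    IsOpen {y | qiMeas ρ {x | (x, y) ∈ A} = c} := by
  refine isOpen_iff_forall_mem_open.2 fun y (hy : qiMeas ρ _ = c) => ?_
  have hAy : IsOpen {x | (x, y) ∈ A} := hA.preimage (.prodMk_left y)
  obtain ⟨C, hC, hCA, hC1⟩ :=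
    hs.simple.exists_isCompact_eq_one hAy ((hs.qiMeas_eq_iff (.inl hAy)).1 hy)
  obtain ⟨u, v, -, hv, hCu, hyv, huv⟩ := generalized_tube_lemma hC isCompact_singleton hA
    fun ⟨x, y'⟩ ⟨hx, (hy' : y' = y)⟩ => hy' ▸ hCA hx
  refine ⟨v, fun y' hy' => ?_, hv, hyv rfl⟩
  have hAy' : IsOpen {x | (x, y') ∈ A} := hA.preimage (.prodMk_left y')
  exact (hs.qiMeas_eq_iff (.inl hAy')).2 <| hs.simple.eq_one_of_le (.inl hAy')
    (hs.simple.1.mono_isCompact_isOpen hC hAy' fun x hx => huv ⟨hCu hx, hy'⟩) hC1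

theorem qiOpen_prodQI_le [T2Space Y] (hρ : IsQuasiIntegral ρ) (hη : IsQuasiIntegral η)
    (hνcf : ∀ K : Set Y, IsCompact K → qiMeas η K ≠ ∞) {A : Set (X × Y)} (hA : IsOpen A) :
    qiOpen (prodQI η ρ) A ≤ c * qiOpen η {y | qiMeas ρ {x | (x, y) ∈ A} = c} := by
  refine iSup₂_le fun f ⟨hf, hfA⟩ => ?_
  have hc := hs.toReal_pos
  set a : C_c(Y, ℝ) := c.toReal⁻¹ • TCc ρ f
  have ha : ∀ y, a y = upperValue μ (fiberY f y) := fun y => by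
    rw [← hs.simple.value_of_nonneg fun x => (hf (x, y)).1]
    simp [a, hs.TCc_apply hρ, hs.eq_mul_value hρ, inv_mul_cancel_left₀ hc.ne']
  have hTf : TCc ρ f = c.toReal • a := by simp [a, smul_smul, mul_inv_cancel₀ hc.ne']
  have haW : Function.support a ⊆ {y | qiMeas ρ {x | (x, y) ∈ A} = c} := fun y hy => by
    have hy' : upperValue μ (fiberY f y) ≠ 0 := by rw [← ha y]; exact hy
    have hpos := (hs.simple.upperValue_nonneg (fiberY f y)).lt_of_ne' hy'
    have hAy : IsOpen {x | (x, y) ∈ A} := hA.preimage (.prodMk_left y)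
    refine (hs.qiMeas_eq_iff (.inl hAy)).2 (hs.simple.eq_one_of_le (.inl hAy)
      (hs.simple.1.mono_isOpen (isOpen_levelSet _ _) hAy fun x hx => hfA (subset_tsupport _ ?_))
      (hs.simple.levelSet_eq_one (half_pos hpos) (half_lt_self hpos)))
    have : upperValue μ (fiberY f y) / 2 < f (x, y) := hx
    exact (lt_trans (half_pos hpos) this).ne'
  have hle := hη.ofReal_le_qiOpen_of_support_subset (a := a)
    (fun y => by
      rw [ha]
      exact ⟨hs.simple.upperValue_nonneg _, hs.simple.upperValue_le zero_le_one
        fun x => (hf (x, y)).2⟩)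
    haW (hνcf _ a.hasCompactSupport)
  calc ENNReal.ofReal (prodQI η ρ f) = c * ENNReal.ofReal (η a) := by
        rw [prodQI, hTf, hη.smul, ENNReal.ofReal_mul hc.le, ENNReal.ofReal_toReal hs.ne_top]
    _ ≤ c * qiOpen η _ := mul_le_mul_right hle c

theorem exists_bump_of_qiMeas_fiber_eq [LocallyCompactSpace X] {A : Set (X × Y)} (hA : IsOpen A)
    {y : Y} (hy : qiMeas ρ {x | (x, y) ∈ A} = c) :
    ∃ (N : Set Y) (h : C_c(X, ℝ)) (C : Set X), IsOpen N ∧ y ∈ N ∧ IsCompact C ∧ μ C = 1 ∧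
      (∀ x, 0 ≤ h x ∧ h x ≤ 1) ∧ (∀ x ∈ C, h x = 1) ∧ tsupport h ×ˢ N ⊆ A := by
  have hAy : IsOpen {x | (x, y) ∈ A} := hA.preimage (.prodMk_left y)
  obtain ⟨C, hC, hCA, hC1⟩ :=
    hs.simple.exists_isCompact_eq_one hAy ((hs.qiMeas_eq_iff (.inl hAy)).1 hy)
  obtain ⟨h, hh1, hhc, hhA, hh01⟩ := exists_continuousMap_one_of_isCompact_subset_isOpen hC hAy hCA
  obtain ⟨u, v, -, hv, hhu, hyv, huv⟩ := generalized_tube_lemma hhc isCompact_singleton hA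
    fun ⟨x, y'⟩ ⟨hx, (hy' : y' = y)⟩ => hy' ▸ hhA hx
  exact ⟨v, ⟨h, hhc⟩, C, hv, hyv rfl, hC, hC1, hh01, fun x hx => hh1 hx,
    fun p hp => huv ⟨hhu hp.1, hp.2⟩⟩

/-- `F (x, y) = min (g y) (∑ z, h_z x * σ_z y)`, where the bumps `h_z` equal `1` on `μ`-full
compacts `C_z` inside the fibres of `A` and the `σ_z` localise them in `y`. -/
theorem exists_upperValue_fiberY_eq [T2Space Y] [LocallyCompactSpace X] [LocallyCompactSpace Y]
    {A : Set (X × Y)} (hA : IsOpen A) {g : C_c(Y, ℝ)} (hg : ∀ y, 0 ≤ g y ∧ g y ≤ 1)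
    (hgW : tsupport g ⊆ {y | qiMeas ρ {x | (x, y) ∈ A} = c}) :
    ∃ F : C_c(X × Y, ℝ), (∀ p, 0 ≤ F p ∧ F p ≤ 1) ∧ tsupport F ⊆ A ∧
      ∀ y, upperValue μ (fiberY F y) = g y := by
  choose! N h C hN hyN hC hC1 hh01 hh1 hNA using
    fun y (hy : y ∈ tsupport g) => hs.exists_bump_of_qiMeas_fiber_eq hA (hgW hy)
  obtain ⟨t, htK, hcov⟩ := g.hasCompactSupport.elim_nhds_subcover N
    fun y hy => (hN y hy).mem_nhds (hyN y hy)
  obtain ⟨D, hD, hDN, hDcov⟩ := g.hasCompactSupport.finite_compact_cover t N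
    (fun z hz => hN z (htK z hz)) hcov
  choose! σ hσ1 hσc hσN hσ01 using fun z (hz : z ∈ t) =>
    exists_continuousMap_one_of_isCompact_subset_isOpen (hD z) (hN z (htK z hz)) (hDN z)
  set S : X × Y → ℝ := fun p => ∑ z ∈ t, h z p.1 * σ z p.2
  set K := ⋃ z ∈ t, tsupport (h z) ×ˢ tsupport (σ z)
  have hS0 : ∀ p, 0 ≤ S p := fun p => Finset.sum_nonneg fun z hz =>
    mul_nonneg (hh01 z (htK z hz) p.1).1 (hσ01 z hz p.2).1
  have hSK : ∀ p, S p ≠ 0 → p ∈ K := fun p hp => by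
    obtain ⟨z, hz, hterm⟩ := Finset.exists_ne_zero_of_sum_ne_zero hp
    exact Set.mem_biUnion hz ⟨subset_tsupport _ (left_ne_zero_of_mul hterm),
      subset_tsupport _ (right_ne_zero_of_mul hterm)⟩
  have hK : IsCompact K := t.isCompact_biUnion fun z hz => (h z).hasCompactSupport.prod (hσc z hz)
  have hKA : K ⊆ A := Set.iUnion₂_subset fun z hz =>
    (Set.prod_mono le_rfl (hσN z hz)).trans (hNA z (htK z hz))
  have hF0 : ∀ p, p ∉ K → min (g p.2) (S p) = 0 := fun p hp => by
    rw [not_imp_comm.1 (hSK p) hp, min_eq_right (hg p.2).1]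
  let F : C_c(X × Y, ℝ) := ⟨⟨fun p => min (g p.2) (S p), by fun_prop⟩,
    HasCompactSupport.intro hK hF0⟩
  refine ⟨F, fun p => ⟨le_min (hg _).1 (hS0 p), (min_le_left _ _).trans (hg _).2⟩,
    (closure_minimal (fun p hp => by_contra fun hpK => (Function.mem_support.1 hp) (hF0 p hpK))
      hK.isClosed).trans hKA,
    fun y => ?_⟩
  by_cases hy : y ∈ tsupport g
  · rw [hDcov, Set.mem_iUnion₂] at hy
    obtain ⟨z, hz, hyD⟩ := hy
    refine hs.simple.upperValue_eq_of_eq_on (hg y).1 (fun x => min_le_left _ _) (hC z (htK z hz))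
      (hC1 z (htK z hz)) fun x hx => min_eq_left ((hg y).2.trans ?_)
    calc (1 : ℝ) = h z x * σ z y := by rw [hh1 z (htK z hz) x hx, hσ1 z hz hyD]; simp
      _ ≤ S (x, y) := Finset.single_le_sum (f := fun z => h z x * σ z y)
          (fun w hw => mul_nonneg (hh01 w (htK w hw) x).1 (hσ01 w hw y).1) hz
  · rw [image_eq_zero_of_notMem_tsupport hy]
    exact hs.simple.upperValue_eq_zero_of_nonpos fun x =>
      (min_le_left _ _).trans_eq (image_eq_zero_of_notMem_tsupport hy)

theorem le_qiOpen_prodQI [T2Space Y] [LocallyCompactSpace X] [LocallyCompactSpace Y]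
    (hρ : IsQuasiIntegral ρ) (hη : IsQuasiIntegral η) {A : Set (X × Y)} (hA : IsOpen A) :
    c * qiOpen η {y | qiMeas ρ {x | (x, y) ∈ A} = c} ≤ qiOpen (prodQI η ρ) A := by
  simp only [qiOpen, ENNReal.mul_iSup]
  refine iSup₂_le fun g ⟨hg, hgW⟩ => ?_
  obtain ⟨F, hF, hFA, hFg⟩ := hs.exists_upperValue_fiberY_eq hA hg hgW
  have hT : TCc ρ F = c.toReal • g := by
    ext y
    rw [hs.TCc_apply hρ, hs.eq_mul_upperValue hρ (k := fiberY F y) fun x => (hF (x, y)).1, hFg]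
    simp
  have hc := hs.toReal_pos
  calc c * ENNReal.ofReal (η g) = ENNReal.ofReal (prodQI η ρ F) := by
        rw [prodQI, hT, hη.smul, ENNReal.ofReal_mul hc.le, ENNReal.ofReal_toReal hs.ne_top]
    _ ≤ _ := ofReal_le_qiOpen (prodQI η ρ) hF hFA

theorem qiMeas_prodQI_of_isOpen [T2Space Y] [LocallyCompactSpace X] [LocallyCompactSpace Y]
    (hρ : IsQuasiIntegral ρ) (hη : IsQuasiIntegral η)
    (hνcf : ∀ K : Set Y, IsCompact K → qiMeas η K ≠ ∞) {A : Set (X × Y)} (hA : IsOpen A) :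
    qiMeas (prodQI η ρ) A = c * qiMeas η {y | qiMeas ρ {x | (x, y) ∈ A} = c} := by
  rw [qiMeas_of_isOpen _ hA, qiMeas_of_isOpen _ (hs.isOpen_setOf_qiMeas_fiber_eq hA)]
  exact (hs.qiOpen_prodQI_le hρ hη hνcf hA).antisymm (hs.le_qiOpen_prodQI hρ hη hA)

end IsAlmostSimpleQIWith

end OpenSets

section CompactSets

variable {X Y : Type*} [TopologicalSpace X] [T2Space X] [TopologicalSpace Y] [T2Space Y]

theorem isCompact_preimage_prodMk_left {A : Set (X × Y)} (hA : IsCompact A) (y : Y) :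
    IsCompact {x | (x, y) ∈ A} :=
  (hA.image continuous_fst).of_isClosed_subset (hA.isClosed.preimage (.prodMk_left y))
    fun x hx => ⟨(x, y), hx, rfl⟩

namespace IsSimpleTM

variable [LocallyCompactSpace Y] {μ : Set X → ℝ≥0∞} (hμ : IsSimpleTM μ)
include hμ

theorem exists_nhds_fiber_subset_null {A : Set (X × Y)} (hA : IsCompact A) {y : Y}
    (hy : μ {x | (x, y) ∈ A} = 0) :
    ∃ (U : Set X) (Q : Set Y), IsOpen U ∧ μ U = 0 ∧ IsClosed Q ∧ Q ∈ nhds y ∧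
      ∀ y' ∈ Q, {x | (x, y') ∈ A} ⊆ U := by
  obtain ⟨U, hU, hAU, hU0⟩ :=
    hμ.exists_isOpen_eq_zero (isCompact_preimage_prodMk_left hA y).isClosed hy
  have hN : IsOpen (Prod.snd '' (A ∩ Prod.fst ⁻¹' Uᶜ))ᶜ :=
    ((hA.inter_right (hU.isClosed_compl.preimage continuous_fst)).image
      continuous_snd).isClosed.isOpen_compl
  have hyN : y ∈ (Prod.snd '' (A ∩ Prod.fst ⁻¹' Uᶜ))ᶜ := fun ⟨p, ⟨hpA, hpU⟩, hpy⟩ =>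
    hpU (hAU (show (p.1, y) ∈ A from hpy ▸ hpA))
  obtain ⟨Q, hQy, hQ, hQN⟩ := exists_mem_nhds_isClosed_subset (hN.mem_nhds hyN)
  exact ⟨U, Q, hU, hU0, hQ, hQy, fun y' hy' x hx =>
    by_contra fun hxU => hQN hy' ⟨(x, y'), ⟨hx, hxU⟩, rfl⟩⟩

/-- Over `y ∉ V` the fibres of `O` lie in one of finitely many `μ`-null open sets `U_z`,
chosen over closed neighbourhoods `Q_z` covering the compact set `snd '' A \ V`. -/
theorem exists_isOpen_superset_fiber_null {A : Set (X × Y)} (hA : IsCompact A) {V : Set Y}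
    (hV : IsOpen V) (hAV : ∀ y, μ {x | (x, y) ∈ A} = 1 → y ∈ V) :
    ∃ O : Set (X × Y), IsOpen O ∧ A ⊆ O ∧ ∀ y ∉ V, μ {x | (x, y) ∈ O} = 0 := by
  have hnull : ∀ y ∈ Prod.snd '' A \ V, μ {x | (x, y) ∈ A} = 0 := fun y hy =>
    (hμ.2 _ (.inr (isCompact_preimage_prodMk_left hA y).isClosed)).resolve_right
      fun h1 => hy.2 (hAV y h1)
  choose! U Q hU hU0 hQ hQy hQA using fun y hy => hμ.exists_nhds_fiber_subset_null hA (hnull y hy)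
  obtain ⟨t, htK, hcov⟩ := ((hA.image continuous_snd).diff hV).elim_nhds_subcover
    (fun y => interior (Q y)) fun y hy =>
      isOpen_interior.mem_nhds (mem_interior_iff_mem_nhds.2 (hQy y hy))
  set O := Prod.snd ⁻¹' V ∪ ((⋂ z ∈ t, (Prod.fst ⁻¹' U z ∪ Prod.snd ⁻¹' (Q z)ᶜ)) ∩
      Prod.snd ⁻¹' (⋃ z ∈ t, interior (Q z)))
  have hO : IsOpen O := (hV.preimage continuous_snd).union ((isOpen_biInter_finset fun z hz =>
      ((hU z (htK z hz)).preimage continuous_fst).union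
        ((hQ z (htK z hz)).isOpen_compl.preimage continuous_snd)).inter
      ((isOpen_biUnion fun z _ => isOpen_interior).preimage continuous_snd))
  refine ⟨O, hO, ?_, ?_⟩
  · rintro ⟨x, y⟩ hxy
    by_cases hyV : y ∈ V
    · exact .inl hyV
    refine .inr ⟨Set.mem_iInter₂.2 fun z hz => ?_, hcov ⟨⟨_, hxy, rfl⟩, hyV⟩⟩
    by_cases hyQ : y ∈ Q z
    · exact .inl (hQA z (htK z hz) y hyQ hxy)
    · exact .inr hyQ
  · intro y hyV
    by_cases hy : ∃ z ∈ t, y ∈ interior (Q z)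
    · obtain ⟨z, hz, hyz⟩ := hy
      refine le_antisymm ((hμ.1.mono_isOpen (hO.preimage (.prodMk_left y)) (hU z (htK z hz))
        fun x hx => ?_).trans (hU0 z (htK z hz)).le) zero_le
      rcases hx with hx | ⟨hx, -⟩
      · exact absurd hx hyV
      · exact (Set.mem_iInter₂.1 hx z hz).resolve_right fun h => h (interior_subset hyz)
    · rw [show {x | (x, y) ∈ _} = (∅ : Set X) from Set.eq_empty_of_forall_notMem fun x hx => ?_,
        hμ.empty]
      rcases hx with hx | ⟨-, hx⟩
      · exact hyV hx
      · exact hy (by simpa using hx)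

end IsSimpleTM

theorem IsAlmostSimpleQIWith.qiMeas_prodQI_of_isCompact [LocallyCompactSpace X]
    [LocallyCompactSpace Y] {ρ : C_c(X, ℝ) → ℝ} {η : C_c(Y, ℝ) → ℝ} {c : ℝ≥0∞}
    {μ : Set X → ℝ≥0∞} (hs : IsAlmostSimpleQIWith ρ c μ) (hρ : IsQuasiIntegral ρ)
    (hη : IsQuasiIntegral η) (hνcf : ∀ K : Set Y, IsCompact K → qiMeas η K ≠ ∞)
    {A : Set (X × Y)} (hA : IsCompact A) :
    qiMeas (prodQI η ρ) A = c * qiMeas η {y | qiMeas ρ {x | (x, y) ∈ A} = c} := by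
  have hAy : ∀ y, IsClosed {x | (x, y) ∈ A} := fun y =>
    (isCompact_preimage_prodMk_left hA y).isClosed
  refine le_antisymm ?_ ?_
  · rw [qiMeas_eq_iInf η, ENNReal.mul_iInf_of_ne hs.pos.ne' hs.ne_top]
    refine le_iInf fun V => ?_
    rw [ENNReal.mul_iInf_of_ne hs.pos.ne' hs.ne_top]
    refine le_iInf fun ⟨hV, hSV⟩ => ?_
    obtain ⟨O, hO, hAO, hOV⟩ := hs.simple.exists_isOpen_superset_fiber_null hA hV
      fun y hy => hSV ((hs.qiMeas_eq_iff (.inr (hAy y))).2 hy)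
    have hWV : {y | qiMeas ρ {x | (x, y) ∈ O} = c} ⊆ V := fun y hy => by_contra fun hyV => by
      have hOy : IsOpen {x | (x, y) ∈ O} := hO.preimage (.prodMk_left y)
      simpa [(hs.qiMeas_eq_iff (.inl hOy)).1 hy] using hOV y hyV
    calc qiMeas (prodQI η ρ) A ≤ qiMeas (prodQI η ρ) O := qiMeas_mono _ hAO
      _ = c * qiMeas η {y | qiMeas ρ {x | (x, y) ∈ O} = c} :=
        hs.qiMeas_prodQI_of_isOpen hρ hη hνcf hO
      _ ≤ c * qiOpen η V := by
        rw [← qiMeas_of_isOpen η hV]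
        exact mul_le_mul_right (qiMeas_mono η hWV) c
  · rw [qiMeas_eq_iInf (prodQI η ρ)]
    refine le_iInf₂ fun O ⟨hO, hAO⟩ => ?_
    rw [← qiMeas_of_isOpen _ hO, hs.qiMeas_prodQI_of_isOpen hρ hη hνcf hO]
    refine mul_le_mul_right (qiMeas_mono η fun y hy => ?_) c
    have hOy : IsOpen {x | (x, y) ∈ O} := hO.preimage (.prodMk_left y)
    exact (hs.qiMeas_eq_iff (.inl hOy)).2 (hs.simple.eq_one_of_le (.inl hOy)
      (hs.simple.1.mono_isClosed_isOpen (hAy y) hOy fun x hx => hAO hx)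
      ((hs.qiMeas_eq_iff (.inr (hAy y))).1 hy))

end CompactSets

theorem statement15_general {X Y : Type*}
    [TopologicalSpace X] [LocallyCompactSpace X] [T2Space X]
    [TopologicalSpace Y] [LocallyCompactSpace Y] [T2Space Y]
    (ρ : C_c(X, ℝ) → ℝ) (η : C_c(Y, ℝ) → ℝ)
    (hρ : IsQuasiIntegral ρ) (hη : IsQuasiIntegral η)
    (c : ℝ≥0∞) (μ' : Set X → ℝ≥0∞) (hc : 0 < c) (hc' : c ≠ ∞) (hμ' : IsSimpleTM μ')
    (hdec : ∀ A : Set X, IsOpen A ∨ IsClosed A → qiMeas ρ A = c * μ' A)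
    (hνcf : ∀ K : Set Y, IsCompact K → qiMeas η K ≠ ∞) :
    IsQuasiIntegral (prodQI η ρ) ∧
    (∀ A : Set (X × Y), IsOpen A →
      qiMeas (prodQI η ρ) A = c * qiMeas η {y : Y | qiMeas ρ {x : X | (x, y) ∈ A} = c}) ∧
    (qiMeas η (Set.univ : Set Y) ≠ ∞ →
      ∀ A : Set (X × Y), IsCompact A →
        qiMeas (prodQI η ρ) A = c * qiMeas η {y : Y | qiMeas ρ {x : X | (x, y) ∈ A} = c}) := by
  have hs : IsAlmostSimpleQIWith ρ c μ' := ⟨hc, hc', hμ', hdec⟩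
  exact ⟨hs.isQuasiIntegral_prodQI hρ hη, fun A hA => hs.qiMeas_prodQI_of_isOpen hρ hη hνcf hA,
    fun _ A hA => hs.qiMeas_prodQI_of_isCompact hρ hη hνcf hA⟩

theorem statement15 {X Y : Type*}
    [TopologicalSpace X] [LocallyCompactSpace X] [T2Space X] [ConnectedSpace X]
    [TopologicalSpace Y] [LocallyCompactSpace Y] [T2Space Y] [ConnectedSpace Y]
    (ρ : C_c(X, ℝ) → ℝ) (η : C_c(Y, ℝ) → ℝ)
    (hρ : IsQuasiIntegral ρ) (hη : IsQuasiIntegral η)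
    (c : ℝ≥0∞) (μ' : Set X → ℝ≥0∞) (hc : 0 < c) (hc' : c ≠ ∞) (hμ' : IsSimpleTM μ')
    (hdec : ∀ A : Set X, IsOpen A ∨ IsClosed A → qiMeas ρ A = c * μ' A)
    (hνcf : ∀ K : Set Y, IsCompact K → qiMeas η K ≠ ∞) :
    IsQuasiIntegral (prodQI η ρ) ∧
    (∀ A : Set (X × Y), IsOpen A →
      qiMeas (prodQI η ρ) A = c * qiMeas η {y : Y | qiMeas ρ {x : X | (x, y) ∈ A} = c}) ∧
    (qiMeas η (Set.univ : Set Y) ≠ ∞ →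
      ∀ A : Set (X × Y), IsCompact A →
        qiMeas (prodQI η ρ) A = c * qiMeas η {y : Y | qiMeas ρ {x : X | (x, y) ∈ A} = c}) :=
  statement15_general ρ η hρ hη c μ' hc hc' hμ' hdec hνcf

end QLF
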